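/- Let M be a locally finite L-structure, A a finite substructure of M, and d ≥ 1 an integer. Then the following are equivalent: (a) for every finite substructure B of M and every integer r ≥ 2 there exists a finite substructure C of M such that C →ᵉ (B)^A_{r,d}; (b) for every finite substructure B of M and every integer r ≥ 2, M →ᵉ (B)^A_{r,d}. Likewise, the following are equivalent: (a') for every finite substructure B of M and every integer r ≥ 2 there exists a finite substructure C of M such that C → (B)^A_{r,d}; (b') for every finite substructure B of M and every integer r ≥ 2, M → (B)^A_{r,d}. (Consequently, the Ramsey degree for embeddings and the Ramsey degree for substructures of A in age(M) equal the corresponding small Ramsey degrees of A in M.) -/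

import Mathlib

/-!
A finite witness `C` gives the arrow in `M` by composing with the inclusion `C ↪ M`. Conversely,
if every finite substructure `C` carried a bad colouring, the limit of these colourings along an
ultrafilter on the finite substructures (directed because `M` is locally finite) would colour
`M`; the copy of `B` it admits lies in some finite `C` whose bad colouring agrees with the limit
on the finitely many copies of `A` inside that copy of `B`, a contradiction.
-/

open FirstOrder FirstOrder.Language

/-- Two same-length tuples have the same quantifier-free type over ∅. -/
def SameQfType (L : FirstOrder.Language) (M : Type*) [L.Structure M] {n : ℕ}
    (x y : Fin n → M) : Prop :=
  ∀ φ : L.Formula (Fin n), φ.IsQF → (φ.Realize x ↔ φ.Realize y)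

/-- A qftp-respecting injection between structures in possibly different languages. -/
def QftpRespecting (L L' : FirstOrder.Language) (M N : Type*) [L.Structure M] [L'.Structure N]
    (h : M → N) : Prop :=
  Function.Injective h ∧
    ∀ (n : ℕ) (x y : Fin n → M), SameQfType L M x y → SameQfType L' N (h ∘ x) (h ∘ y)

/-- `(g, f)` is a semi-retraction between `M` and `N`: both maps are qftp-respecting
injections and `f ∘ g` is qftp-preserving (equivalently, an `L`-embedding of `M` into `M`). -/
def IsSemiRetraction (L L' : FirstOrder.Language) (M N : Type*)
    [L.Structure M] [L'.Structure N] (g : M → N) (f : N → M) : Prop :=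
  QftpRespecting L L' M N g ∧ QftpRespecting L' L N M f ∧
    ∀ (n : ℕ) (x : Fin n → M), SameQfType L M x (f ∘ g ∘ x)

/-- `M` is locally finite: every finitely generated substructure is finite. -/
def StructLocallyFinite (L : FirstOrder.Language) (M : Type*) [L.Structure M] : Prop :=
  ∀ S : L.Substructure M, S.FG → (S : Set M).Finite

/-- `M → (B)^A_{r,d}` for substructures. -/
def ArrowSub (L : FirstOrder.Language) (M : Type*) [L.Structure M]
    (A B : L.Substructure M) (r d : ℕ) : Prop :=
  ∀ c : L.Substructure M → Fin r, ∃ B' : L.Substructure M,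
    Nonempty (B' ≃[L] B) ∧
      (c '' {A' : L.Substructure M | A' ≤ B' ∧ Nonempty (A' ≃[L] A)}).ncard ≤ d

/-- `M →ᵉ (B)^A_{r,d}` for embeddings. -/
def ArrowEmb (L : FirstOrder.Language) (M : Type*) [L.Structure M]
    (A B : L.Substructure M) (r d : ℕ) : Prop :=
  ∀ c : (A ↪[L] M) → Fin r, ∃ h : B ↪[L] M,
    (c '' {j : A ↪[L] M | ∃ e : A ↪[L] B, j = h.comp e}).ncard ≤ d

/-- A structure is rigid if its only automorphism is the identity. -/
def IsRigidStructure (L : FirstOrder.Language) (M : Type*) [L.Structure M] : Prop :=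
  ∀ σ : M ≃[L] M, ∀ x : M, σ x = x


/-- `C → (B)^A_{r,d}` computed inside the substructure `C` of `M`: colorings of copies of `A`
lying in `C` admit a copy `B'` of `B` inside `C` on whose copies of `A` at most `d` colors
appear. -/
def ArrowSubIn (L : FirstOrder.Language) (M : Type*) [L.Structure M]
    (C A B : L.Substructure M) (r d : ℕ) : Prop :=
  ∀ c : L.Substructure M → Fin r, ∃ B' : L.Substructure M, B' ≤ C ∧
    Nonempty (B' ≃[L] B) ∧
      (c '' {A' : L.Substructure M | A' ≤ B' ∧ Nonempty (A' ≃[L] A)}).ncard ≤ d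

/-- `C →ᵉ (B)^A_{r,d}` computed inside the substructure `C` of `M`. -/
def ArrowEmbIn (L : FirstOrder.Language) (M : Type*) [L.Structure M]
    (C A B : L.Substructure M) (r d : ℕ) : Prop :=
  ∀ c : (A ↪[L] C) → Fin r, ∃ h : B ↪[L] C,
    (c '' {j : A ↪[L] C | ∃ e : A ↪[L] B, j = h.comp e}).ncard ≤ d

open Filter

theorem exists_coloring_frequently_eq {ι X κ : Type*} [Preorder ι] [IsDirected ι (· ≤ ·)]
    [Nonempty ι] [Finite κ] (c : ι → X → κ) :
    ∃ col : X → κ, ∀ S : Set X, S.Finite → ∀ D : ι, ∃ C, D ≤ C ∧ ∀ x ∈ S, c C x = col x := by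
  let U : Ultrafilter ι := .of atTop
  have hlim : ∀ x, ∃ k, ∀ᶠ C in (U : Filter ι), c C x = k := fun x => by
    obtain ⟨k, hk⟩ := (U.map (c · x)).eq_pure_of_finite
    exact ⟨k, Ultrafilter.mem_map.1 (hk ▸ rfl : {k} ∈ U.map (c · x))⟩
  choose col hcol using hlim
  refine ⟨col, fun S hS D => ?_⟩
  have hD : ∀ᶠ C in (U : Filter ι), D ≤ C := Ultrafilter.of_le _ (eventually_ge_atTop D)
  exact (hD.and ((eventually_all_finite hS).2 fun x _ => hcol x)).exists

namespace FirstOrder.Language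

variable {L : Language} {M N : Type*} [L.Structure M] [L.Structure N]

instance Embedding.finite [Finite N] : Finite (M ↪[L] N) :=
  Finite.of_injective Embedding.toEmbedding fun _ _ h => DFunLike.coe_injective (congrArg (⇑) h)

theorem Substructure.finite_Iic {S : L.Substructure M} (hS : (S : Set M).Finite) :
    (Set.Iic S).Finite :=
  (hS.finite_subsets.preimage SetLike.coe_injective.injOn).subset fun _ h => SetLike.coe_subset_coe.2 h

end FirstOrder.Language

section Arrow

variable {L : FirstOrder.Language} {M : Type*} [L.Structure M]

theorem StructLocallyFinite.isDirected (hlf : StructLocallyFinite L M) :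
    IsDirected {C : L.Substructure M // (C : Set M).Finite} (· ≤ ·) where
  directed C D := by
    have hfg : ∀ E : {C : L.Substructure M // (C : Set M).Finite}, E.1.FG := fun E =>
      Substructure.fg_def.2 ⟨E.1, E.2, Substructure.closure_eq E.1⟩
    exact ⟨⟨C.1 ⊔ D.1, hlf _ ((hfg C).sup (hfg D))⟩, le_sup_left (a := C.1), le_sup_right (a := C.1)⟩

theorem ArrowEmbIn.arrowEmb {C A B : L.Substructure M} {r d : ℕ}
    (hC : ArrowEmbIn L M C A B r d) : ArrowEmb L M A B r d := by
  intro c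
  obtain ⟨h, hh⟩ := hC (fun j => c (C.subtype.comp j))
  refine ⟨C.subtype.comp h, le_of_eq_of_le (congrArg Set.ncard ?_) hh⟩
  ext
  simp only [Set.mem_image, Set.mem_ofPred_eq]
  constructor
  · rintro ⟨_, ⟨e, rfl⟩, rfl⟩
    exact ⟨h.comp e, ⟨e, rfl⟩, by rw [Embedding.comp_assoc]⟩
  · rintro ⟨_, ⟨e, rfl⟩, rfl⟩
    exact ⟨_, ⟨e, rfl⟩, by rw [Embedding.comp_assoc]⟩

theorem ArrowSubIn.arrowSub {C A B : L.Substructure M} {r d : ℕ}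
    (hC : ArrowSubIn L M C A B r d) : ArrowSub L M A B r d := fun c =>
  let ⟨B', _, hB', hle⟩ := hC c
  ⟨B', hB', hle⟩

theorem ArrowEmb.exists_finite_arrowEmbIn (hlf : StructLocallyFinite L M)
    {A B : L.Substructure M} (hB : (B : Set M).Finite) {r d : ℕ} (hr : 0 < r)
    (hM : ArrowEmb L M A B r d) :
    ∃ C : L.Substructure M, (C : Set M).Finite ∧ ArrowEmbIn L M C A B r d := by
  classical
  by_contra! hcon
  have hbad : ∀ C : {C : L.Substructure M // (C : Set M).Finite},
      ∃ cc : (A ↪[L] C.1) → Fin r, ∀ h : B ↪[L] C.1,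
        d < (cc '' {j | ∃ e : A ↪[L] B, j = h.comp e}).ncard := fun C => by
    simpa [ArrowEmbIn] using hcon C.1 C.2
  choose cc hcc using hbad
  have := hlf.isDirected
  have : Nonempty {C : L.Substructure M // (C : Set M).Finite} := ⟨⟨B, hB⟩⟩
  have : Finite B := hB.to_subtype
  -- embeddings leaving `C` get an arbitrary colour; they never matter
  let c C (e : A ↪[L] M) : Fin r :=
    if he : ∀ a, e a ∈ C.1 then cc C (e.codRestrict C.1 he) else ⟨0, hr⟩
  obtain ⟨col, hcol⟩ := exists_coloring_frequently_eq c
  obtain ⟨h, hh⟩ := hM col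
  obtain ⟨C, hDC, hC⟩ := hcol (Set.range fun e : A ↪[L] B => h.comp e) (Set.finite_range _)
    ⟨h.toHom.range, Hom.range_coe h.toHom ▸ Set.finite_range _⟩
  have hmem : ∀ b, h b ∈ C.1 := fun b => hDC (h.toHom.mem_range_self b)
  refine (hcc C (h.codRestrict C.1 hmem)).not_ge
    ((Set.ncard_le_ncard ?_ (Set.toFinite _)).trans hh)
  rintro _ ⟨_, ⟨e, rfl⟩, rfl⟩
  refine ⟨h.comp e, ⟨e, rfl⟩, ?_⟩
  rw [← hC _ ⟨e, rfl⟩]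
  simp [c, fun a => hmem (e a)]

theorem ArrowSub.exists_finite_arrowSubIn (hlf : StructLocallyFinite L M)
    {A B : L.Substructure M} (hB : (B : Set M).Finite) {r d : ℕ}
    (hM : ArrowSub L M A B r d) :
    ∃ C : L.Substructure M, (C : Set M).Finite ∧ ArrowSubIn L M C A B r d := by
  by_contra! hcon
  have hbad : ∀ C : {C : L.Substructure M // (C : Set M).Finite},
      ∃ cc : L.Substructure M → Fin r, ∀ B' ≤ C.1, Nonempty (B' ≃[L] B) →
        d < (cc '' {A' | A' ≤ B' ∧ Nonempty (A' ≃[L] A)}).ncard := fun C => by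
    simpa [ArrowSubIn] using hcon C.1 C.2
  choose cc hcc using hbad
  have := hlf.isDirected
  have : Nonempty {C : L.Substructure M // (C : Set M).Finite} := ⟨⟨B, hB⟩⟩
  obtain ⟨col, hcol⟩ := exists_coloring_frequently_eq cc
  obtain ⟨B', ⟨iso⟩, hh⟩ := hM col
  have : Finite B := hB.to_subtype
  have hB' : (B' : Set M).Finite := Set.finite_coe_iff.1 (Finite.of_equiv _ iso.toEquiv.symm)
  obtain ⟨C, hDC, hC⟩ := hcol {A' | A' ≤ B' ∧ Nonempty (A' ≃[L] A)}
    ((Substructure.finite_Iic hB').subset fun _ h => h.1) ⟨B', hB'⟩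
  exact (hcc C B' hDC ⟨iso⟩).not_ge (by rwa [Set.image_congr hC])

end Arrow

theorem ramsey_degree_age_eq_small_ramsey_degree
    {L : FirstOrder.Language} {M : Type*} [L.Structure M]
    (hlf : StructLocallyFinite L M)
    (A : L.Substructure M)
    (d : ℕ) :
    ((∀ B : L.Substructure M, (B : Set M).Finite → ∀ r : ℕ, 2 ≤ r →
        ∃ C : L.Substructure M, (C : Set M).Finite ∧ ArrowEmbIn L M C A B r d) ↔
      (∀ B : L.Substructure M, (B : Set M).Finite → ∀ r : ℕ, 2 ≤ r →
        ArrowEmb L M A B r d)) ∧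
    ((∀ B : L.Substructure M, (B : Set M).Finite → ∀ r : ℕ, 2 ≤ r →
        ∃ C : L.Substructure M, (C : Set M).Finite ∧ ArrowSubIn L M C A B r d) ↔
      (∀ B : L.Substructure M, (B : Set M).Finite → ∀ r : ℕ, 2 ≤ r →
        ArrowSub L M A B r d)) := by
  refine ⟨⟨fun h B hB r hr => ?_, fun h B hB r hr => ?_⟩,
    ⟨fun h B hB r hr => ?_, fun h B hB r hr => ?_⟩⟩
  · obtain ⟨C, -, hC⟩ := h B hB r hr
    exact hC.arrowEmb
  · exact (h B hB r hr).exists_finite_arrowEmbIn hlf hB (by omega)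
  · obtain ⟨C, -, hC⟩ := h B hB r hr
    exact hC.arrowSub
  · exact (h B hB r hr).exists_finite_arrowSubIn hlf hB
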